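/- For positive semidefinite n×n matrices R, S, the supremum of Re Tr(X†Y) over X, Y with X†X = R, Y†Y = S is achieved at X = R^{1/2} and Y satisfying Y X† = √(X S X†) = X Y†; in particular for every X with X†X = R there exists Y with Y†Y = S and Re Tr(X†Y) = Tr√(X S X†). -/

import Mathlib

open Matrix Kronecker
open scoped ComplexOrder

open scoped Classical in
/-- Positive semidefinite square root (zero if the matrix is not PSD). -/
noncomputable def psqrt {n : Type*} [Fintype n] [DecidableEq n] (A : Matrix n n ℂ) : Matrix n n ℂ :=
  if h : A.PosSemidef then
    (h.1.eigenvectorUnitary : Matrix n n ℂ) * diagonal ((↑) ∘ (Real.sqrt ·) ∘ h.1.eigenvalues) *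
      (star h.1.eigenvectorUnitary : Matrix n n ℂ) else 0

/-- Matrix absolute value `|A| = √(Aᴴ A)`. -/
noncomputable def matAbs {n : Type*} [Fintype n] [DecidableEq n] (A : Matrix n n ℂ) : Matrix n n ℂ :=
  psqrt (Aᴴ * A)

/-!
Since `Xᴴ X = R` is invertible, so is `X`. The square root `Q = √(X S Xᴴ)` is Hermitian with
`Q² = X S Xᴴ`, so `Y = Q (Xᴴ)⁻¹` satisfies `Yᴴ Y = X⁻¹ Q² (Xᴴ)⁻¹ = S`, `Y Xᴴ = Q = X Yᴴ`, and
`Tr (Xᴴ Y) = Tr (Y Xᴴ) = Tr Q`.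
-/

open scoped MatrixOrder

theorem psqrt_eq_sqrt {n : Type*} [Fintype n] [DecidableEq n] {M : Matrix n n ℂ}
    (hM : M.PosSemidef) : psqrt M = CFC.sqrt M := by
  rw [CFC.sqrt_eq_cfc, cfc_nnreal_eq_real _ M hM.nonneg, hM.1.cfc_eq, psqrt, dif_pos hM,
    IsHermitian.cfc, Unitary.conjStarAlgAut_apply]
  congr 4
  ext x
  simp [max_eq_left (hM.eigenvalues_nonneg x)]

theorem exists_conjTranspose_mul_self_eq_of_mul_self_eq {n K : Type*} [Fintype n] [DecidableEq n]
    [CommRing K] [StarRing K] {X S Q : Matrix n n K} (hX : IsUnit X) (hQ : Q.IsHermitian)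
    (hQQ : Q * Q = X * S * Xᴴ) : ∃ Y : Matrix n n K, Yᴴ * Y = S ∧ Y * Xᴴ = Q ∧ X * Yᴴ = Q := by
  have hXXinv : X * X⁻¹ = 1 := mul_nonsing_inv X ((isUnit_iff_isUnit_det X).mp hX)
  have hXinvX : X⁻¹ * X = 1 := nonsing_inv_mul X ((isUnit_iff_isUnit_det X).mp hX)
  have hYH : (Q * X⁻¹ᴴ)ᴴ = X⁻¹ * Q := by
    rw [conjTranspose_mul, conjTranspose_conjTranspose, hQ.eq]
  refine ⟨Q * X⁻¹ᴴ, ?_, ?_, ?_⟩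
  · calc (Q * X⁻¹ᴴ)ᴴ * (Q * X⁻¹ᴴ)
        _ = X⁻¹ * (Q * Q) * X⁻¹ᴴ := by rw [hYH]; simp only [Matrix.mul_assoc]
        _ = (X⁻¹ * X) * S * (X⁻¹ * X)ᴴ := by
          rw [hQQ, conjTranspose_mul]; simp only [Matrix.mul_assoc]
        _ = S := by rw [hXinvX, conjTranspose_one, one_mul, mul_one]
  · rw [Matrix.mul_assoc, ← conjTranspose_mul, hXXinv, conjTranspose_one, mul_one]
  · rw [hYH, ← Matrix.mul_assoc, hXXinv, one_mul]

theorem uhlmann_sup_achieved {n : Type*} [Fintype n] [DecidableEq n]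
    (R S : Matrix n n ℂ) (hR : R.PosDef) (hS : S.PosDef) :
    ∀ X : Matrix n n ℂ, Xᴴ * X = R →
      ∃ Y : Matrix n n ℂ, Yᴴ * Y = S ∧
        Y * Xᴴ = psqrt (X * S * Xᴴ) ∧ X * Yᴴ = psqrt (X * S * Xᴴ) ∧
        ((Xᴴ * Y).trace).re = ((psqrt (X * S * Xᴴ)).trace).re := by
  intro X hX
  have hXS : (X * S * Xᴴ).PosSemidef := hS.posSemidef.mul_mul_conjTranspose_same X
  rw [psqrt_eq_sqrt hXS]
  obtain ⟨Y, hYY, hYX, hXY⟩ := exists_conjTranspose_mul_self_eq_of_mul_self_eq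
    (isUnit_of_mul_isUnit_right (hX ▸ hR.isUnit)) (CFC.sqrt_nonneg _).posSemidef.isHermitian
    (CFC.sqrt_mul_sqrt_self _ hXS.nonneg)
  exact ⟨Y, hYY, hYX, hXY, by rw [trace_mul_comm, hYX]⟩
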